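/- arXiv:2312.09914 — 5 statements merged into one kernel-verified Lean document; each statement's English description precedes it below -/
import Mathlib

section
/- Let (W,+) be a semigroup, A ⊆ W a two-sided ideal of (W,+), and e an idempotent of W with e ∉ A. Then H(e) = W(e)\A if and only if W(e)\A, equipped with the operation +, is a group (i.e., W(e)\A is closed under +, contains a two-sided identity element, and every element of W(e)\A has an inverse with respect to that identity). -/
open Pointwise

/-- Principal left ideal W_L(u) = (W + {u}) ∪ {u}. -/
def WLset {W : Type*} [AddSemigroup W] (u : W) : Set W :=
  ((Set.univ : Set W) + ({u} : Set W)) ∪ {u}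

/-- Principal right ideal W_R(u) = ({u} + W) ∪ {u}. -/
def WRset {W : Type*} [AddSemigroup W] (u : W) : Set W :=
  (({u} : Set W) + (Set.univ : Set W)) ∪ {u}

/-- Principal two-sided ideal W(u) = (W_L(u) + W) ∪ W_L(u). -/
def WIset {W : Type*} [AddSemigroup W] (u : W) : Set W :=
  (WLset u + (Set.univ : Set W)) ∪ WLset u

/-- Green L-class. -/
def Lclass {W : Type*} [AddSemigroup W] (u : W) : Set W := {v | WLset u = WLset v}

/-- Green R-class. -/
def Rclass {W : Type*} [AddSemigroup W] (u : W) : Set W := {v | WRset u = WRset v}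

/-- Green H-class. -/
def Hclass {W : Type*} [AddSemigroup W] (u : W) : Set W :=
  {v | WLset u = WLset v ∧ WRset u = WRset v}

def IsLeftIdealSG {W : Type*} [AddSemigroup W] (A : Set W) : Prop :=
  (Set.univ : Set W) + A ⊆ A

def IsRightIdealSG {W : Type*} [AddSemigroup W] (A : Set W) : Prop :=
  A + (Set.univ : Set W) ⊆ A

def IsIdealSG {W : Type*} [AddSemigroup W] (A : Set W) : Prop :=
  IsLeftIdealSG A ∧ IsRightIdealSG A

/-- The set E(W) of idempotents. -/
def Eset (W : Type*) [AddSemigroup W] : Set W := {e | e + e = e}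

/-- The Rees order: f ≤_H e iff e + f = f + e = f. -/
def ReesLE {W : Type*} [AddSemigroup W] (f e : W) : Prop := e + f = f ∧ f + e = f

/-- E^≤(e) = {f ∈ E(W) | f ≤_H e}. -/
def Ele {W : Type*} [AddSemigroup W] (e : W) : Set W := {f ∈ Eset W | ReesLE f e}

/-- E^lin(W): idempotents α such that ≤_H is a total order on E^≤(α). -/
def Elin (W : Type*) [AddSemigroup W] : Set W :=
  {α ∈ Eset W | ∀ f ∈ Ele α, ∀ g ∈ Ele α, ReesLE f g ∨ ReesLE g f}

def Afin (W : Type*) [AddSemigroup W] : Set W :=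
  {α ∈ Elin W | (Ele α).Finite ∧ ∀ w ∉ Ele α, w + α = α ∧ α + w = α}

/-- The set A(W) of quasi-absorbing elements. -/
def AW (W : Type*) [AddSemigroup W] : Set W :=
  {α ∈ Elin W | ∀ w ∉ Ele α, w + α = α ∧ α + w = α}

/-- Ā_n = ⋃_{i=1}^n A_i. -/
def Abar (W : Type*) [AddSemigroup W] : ℕ → Set W
  | 0 => ∅
  | n + 1 => Abar W n ∪ {α | α ∉ Abar W n ∧ ∀ w ∉ Abar W n, w + α = α ∧ α + w = α}

/-- The sets A_n from the stepwise construction. -/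
def Astep (W : Type*) [AddSemigroup W] : ℕ → Set W
  | 0 => ∅
  | n + 1 => {α | α ∉ Abar W n ∧ ∀ w ∉ Abar W n, w + α = α ∧ α + w = α}

/-- The set A_s(W) of stepwise quasi-absorbing elements. -/
def As (W : Type*) [AddSemigroup W] : Set W := {α | ∃ n, α ∈ Astep W n}

/-- The set P(A) of A-primitive idempotents. -/
def Pset {W : Type*} [AddSemigroup W] (A : Set W) : Set W :=
  {e | e ∈ Eset W \ A ∧ ∀ f ∈ Eset W, ReesLE f e → f = e ∨ f ∈ A}

/-- G ⊆ W is a group under +: closed, with a two-sided identity and inverses. -/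
def IsGroupOn {W : Type*} [AddSemigroup W] (G : Set W) : Prop :=
  (∀ a ∈ G, ∀ b ∈ G, a + b ∈ G) ∧
  ∃ e ∈ G, (∀ a ∈ G, a + e = a ∧ e + a = a) ∧
    ∀ a ∈ G, ∃ b ∈ G, a + b = e ∧ b + a = e

/-- D is an A-minimal ideal. -/
def IsMinimalIdealRel {W : Type*} [AddSemigroup W] (A D : Set W) : Prop :=
  IsIdealSG D ∧ ¬ D ⊆ A ∧ ∀ E : Set W, IsIdealSG E → E ⊂ D → E ⊆ A

/-- D is an ideal of the subsemigroup (V,+). -/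
def IsIdealIn {W : Type*} [AddSemigroup W] (V D : Set W) : Prop :=
  D ⊆ V ∧ V + D ⊆ D ∧ D + V ⊆ D

/-- The subsemigroup (V,+) is A-simple. -/
def IsSimpleRel {W : Type*} [AddSemigroup W] (V A : Set W) : Prop :=
  A ⊂ V ∧ ∀ D : Set W, IsIdealIn V D → D = V ∨ D ⊆ A

/-- A bottleneck ideal. -/
def IsBottleneck {W : Type*} [AddSemigroup W] (A : Set W) : Prop :=
  IsIdealSG A ∧ ∀ D : Set W, IsIdealSG D → D ⊆ A ∨ A ⊆ D

/-!
The H-class of an idempotent `e` is always a group with identity `e` (Green's theorem), and it lies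
in `W(e) \ A` because a left ideal containing some `v` with `e ∈ W_L(v)` would contain `e`. Conversely,
in a group `G ⊆ W` containing `e` the identity must be `e`, and then every `v ∈ G` satisfies
`v + e = v = e + v` and `b + v = e = v + b` for its inverse `b`, which puts `v` in `H(e)`.
-/

section Green

variable {W : Type*} [AddSemigroup W] {u v x e : W}

lemma mem_WLset_iff : x ∈ WLset u ↔ (∃ w, w + u = x) ∨ x = u := by
  simp [WLset, or_comm]

lemma mem_WRset_iff : x ∈ WRset u ↔ (∃ w, u + w = x) ∨ x = u := by
  simp [WRset, or_comm]

lemma self_mem_WLset (u : W) : u ∈ WLset u := mem_WLset_iff.mpr (Or.inr rfl)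

lemma self_mem_WRset (u : W) : u ∈ WRset u := mem_WRset_iff.mpr (Or.inr rfl)

lemma WLset_subset_of_mem (h : v ∈ WLset u) : WLset v ⊆ WLset u := by
  intro x hx
  rcases mem_WLset_iff.mp hx with ⟨w, rfl⟩ | rfl
  · rcases mem_WLset_iff.mp h with ⟨y, rfl⟩ | rfl
    · exact mem_WLset_iff.mpr (Or.inl ⟨w + y, add_assoc w y u⟩)
    · exact mem_WLset_iff.mpr (Or.inl ⟨w, rfl⟩)
  · exact h

lemma WRset_subset_of_mem (h : v ∈ WRset u) : WRset v ⊆ WRset u := by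
  intro x hx
  rcases mem_WRset_iff.mp hx with ⟨w, rfl⟩ | rfl
  · rcases mem_WRset_iff.mp h with ⟨y, rfl⟩ | rfl
    · exact mem_WRset_iff.mpr (Or.inl ⟨y + w, (add_assoc u y w).symm⟩)
    · exact mem_WRset_iff.mpr (Or.inl ⟨w, rfl⟩)
  · exact h

lemma WLset_eq_iff : WLset u = WLset v ↔ v ∈ WLset u ∧ u ∈ WLset v :=
  ⟨fun h => ⟨h ▸ self_mem_WLset v, h ▸ self_mem_WLset u⟩,
    fun ⟨hv, hu⟩ => (WLset_subset_of_mem hu).antisymm (WLset_subset_of_mem hv)⟩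

lemma WRset_eq_iff : WRset u = WRset v ↔ v ∈ WRset u ∧ u ∈ WRset v :=
  ⟨fun h => ⟨h ▸ self_mem_WRset v, h ▸ self_mem_WRset u⟩,
    fun ⟨hv, hu⟩ => (WRset_subset_of_mem hu).antisymm (WRset_subset_of_mem hv)⟩

lemma self_mem_Hclass (u : W) : u ∈ Hclass u := ⟨rfl, rfl⟩

lemma IsLeftIdealSG.WLset_subset {A : Set W} (hA : IsLeftIdealSG A) (hv : v ∈ A) :
    WLset v ⊆ A := by
  intro x hx
  rcases mem_WLset_iff.mp hx with ⟨w, rfl⟩ | rfl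
  · exact hA (Set.add_mem_add (Set.mem_univ w) hv)
  · exact hv

lemma Hclass_subset_WIset_diff {A : Set W} (hA : IsLeftIdealSG A) (huA : u ∉ A) :
    Hclass u ⊆ WIset u \ A := by
  rintro v ⟨hL, -⟩
  have hv : v ∈ WLset u ∧ u ∈ WLset v := WLset_eq_iff.mp hL
  exact ⟨Or.inr hv.1, fun hvA => huA (hA.WLset_subset hvA hv.2)⟩

lemma mem_WLset_iff_of_idem (he : e + e = e) : v ∈ WLset e ↔ v + e = v := by
  refine ⟨fun h => ?_, fun h => mem_WLset_iff.mpr (Or.inl ⟨v, h⟩)⟩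
  rcases mem_WLset_iff.mp h with ⟨w, rfl⟩ | rfl
  · rw [add_assoc, he]
  · exact he

lemma mem_WRset_iff_of_idem (he : e + e = e) : v ∈ WRset e ↔ e + v = v := by
  refine ⟨fun h => ?_, fun h => mem_WRset_iff.mpr (Or.inl ⟨v, h⟩)⟩
  rcases mem_WRset_iff.mp h with ⟨w, rfl⟩ | rfl
  · rw [← add_assoc, he]
  · exact he

lemma idem_mem_WLset_iff (he : e + e = e) : e ∈ WLset v ↔ ∃ a, a + v = e := by
  refine ⟨fun h => ?_, fun h => mem_WLset_iff.mpr (Or.inl h)⟩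
  rcases mem_WLset_iff.mp h with h | rfl
  · exact h
  · exact ⟨e, he⟩

lemma idem_mem_WRset_iff (he : e + e = e) : e ∈ WRset v ↔ ∃ c, v + c = e := by
  refine ⟨fun h => ?_, fun h => mem_WRset_iff.mpr (Or.inl h)⟩
  rcases mem_WRset_iff.mp h with h | rfl
  · exact h
  · exact ⟨e, he⟩

lemma mem_Hclass_iff_of_idem (he : e + e = e) :
    v ∈ Hclass e ↔ (v + e = v ∧ ∃ a, a + v = e) ∧ (e + v = v ∧ ∃ c, v + c = e) := by
  rw [Hclass, Set.mem_ofPred_eq, WLset_eq_iff, WRset_eq_iff, mem_WLset_iff_of_idem he,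
    mem_WRset_iff_of_idem he, idem_mem_WLset_iff he, idem_mem_WRset_iff he]

lemma isGroupOn_Hclass (he : e + e = e) : IsGroupOn (Hclass e) := by
  simp only [IsGroupOn, mem_Hclass_iff_of_idem he]
  refine ⟨?closed, e, ⟨⟨he, e, he⟩, he, e, he⟩, fun v hv => ⟨hv.1.1, hv.2.1⟩, ?inverse⟩
  case closed =>
    rintro v ⟨⟨hve, av, hav⟩, hev, cv, hvc⟩ w ⟨⟨hwe, aw, haw⟩, hew, cw, hwc⟩
    refine ⟨⟨by rw [add_assoc, hwe], aw + av, ?_⟩, by rw [← add_assoc, hev], cw + cv, ?_⟩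
    · rw [add_assoc, ← add_assoc av, hav, hew, haw]
    · rw [add_assoc, ← add_assoc w, hwc, ← add_assoc v, hve, hvc]
  case inverse =>
    rintro v ⟨⟨hve, a, hav⟩, hev, c, hvc⟩
    -- `a + e` is both a left and a right inverse of `v`, since it equals `e + c`
    have hac : a + e = e + c := by
      calc a + e = a + (v + c) := by rw [hvc]
        _ = e + c := by rw [← add_assoc, hav]
    refine ⟨a + e, ⟨⟨by rw [add_assoc, he], v, ?_⟩, by rw [hac, ← add_assoc, he], v, ?_⟩, ?_, ?_⟩
    · rw [hac, ← add_assoc, hve, hvc]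
    · rw [add_assoc, hev, hav]
    · rw [hac, ← add_assoc, hve, hvc]
    · rw [add_assoc, hev, hav]

lemma subset_Hclass_of_isGroupOn {G : Set W} (hG : IsGroupOn G) (he : e + e = e) (heG : e ∈ G) :
    G ⊆ Hclass e := by
  obtain ⟨-, f, -, hid, hinv⟩ := hG
  have hfe : f = e := by
    obtain ⟨b, -, heb, -⟩ := hinv e heG
    calc f = e + b := heb.symm
      _ = e + (e + b) := by rw [← add_assoc, he]
      _ = e := by rw [heb, (hid e heG).1]
  subst hfe
  intro v hv
  obtain ⟨b, -, hvb, hbv⟩ := hinv v hv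
  exact (mem_Hclass_iff_of_idem he).mpr ⟨⟨(hid v hv).1, b, hbv⟩, (hid v hv).2, b, hvb⟩

end Green

theorem H_eq_W_diff_A_iff_group {W : Type*} [AddSemigroup W] (A : Set W)
    (hA : IsIdealSG A) (e : W) (he : e ∈ Eset W) (heA : e ∉ A) :
    Hclass e = WIset e \ A ↔ IsGroupOn (WIset e \ A) := by
  have hHsub : Hclass e ⊆ WIset e \ A := Hclass_subset_WIset_diff hA.1 heA
  refine ⟨fun hH => hH ▸ isGroupOn_Hclass he, fun hG => hHsub.antisymm ?_⟩
  exact subset_Hclass_of_isGroupOn hG he (hHsub (self_mem_Hclass e))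
end

section
/- Let (W,+) be a semigroup and β ∈ W. Then β ∈ A_fin(W) if and only if there exists α ∈ A_fin(W) with β ∈ E^≤(α). -/
open Pointwise

/-! The absorption condition `w + α = α ∧ α + w = α` in `Afin` is literally `ReesLE α w`, so
everything follows from transitivity of the Rees order. If `β ≤_H α` then `E^≤(β) ⊆ E^≤(α)`, which
passes linearity and finiteness down to `β`; and an element `w ∉ E^≤(β)` either lies outside
`E^≤(α)`, so that `β ≤_H α ≤_H w`, or inside it, where linearity of `E^≤(α)` forces `β ≤_H w`. -/

section ReesOrder

variable {W : Type*} [AddSemigroup W]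

theorem reesLE_self {e : W} (he : e ∈ Eset W) : ReesLE e e := ⟨he, he⟩

theorem ReesLE.trans {f e d : W} (hfe : ReesLE f e) (hed : ReesLE e d) : ReesLE f d := by
  constructor
  · calc d + f = d + (e + f) := by rw [hfe.1]
      _ = (d + e) + f := (add_assoc _ _ _).symm
      _ = f := by rw [hed.1, hfe.1]
  · calc f + d = (f + e) + d := by rw [hfe.2]
      _ = f + (e + d) := add_assoc _ _ _
      _ = f := by rw [hed.2, hfe.2]

theorem self_mem_Ele {e : W} (he : e ∈ Eset W) : e ∈ Ele e := ⟨he, reesLE_self he⟩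

theorem Ele_subset_of_reesLE {β α : W} (hβα : ReesLE β α) : Ele β ⊆ Ele α :=
  fun _ ⟨hfE, hfβ⟩ => ⟨hfE, hfβ.trans hβα⟩

theorem mem_Elin_of_mem_Ele {α β : W} (hα : α ∈ Elin W) (hβ : β ∈ Ele α) : β ∈ Elin W :=
  ⟨hβ.1, fun f hf g hg =>
    hα.2 f (Ele_subset_of_reesLE hβ.2 hf) g (Ele_subset_of_reesLE hβ.2 hg)⟩

theorem mem_Afin_of_mem_Ele {α β : W} (hα : α ∈ Afin W) (hβ : β ∈ Ele α) : β ∈ Afin W := by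
  obtain ⟨hαlin, hαfin, hαabs⟩ := hα
  refine ⟨mem_Elin_of_mem_Ele hαlin hβ, hαfin.subset (Ele_subset_of_reesLE hβ.2), ?_⟩
  intro w hwβ
  show ReesLE β w
  by_cases hwα : w ∈ Ele α
  · exact (hαlin.2 β hβ w hwα).resolve_right fun hwβ' => hwβ ⟨hwα.1, hwβ'⟩
  · exact hβ.2.trans (hαabs w hwα)

end ReesOrder

theorem Afin_char {W : Type*} [AddSemigroup W] (β : W) :
    β ∈ Afin W ↔ ∃ α ∈ Afin W, β ∈ Ele α :=
  ⟨fun hβ => ⟨β, hβ, self_mem_Ele hβ.1.1⟩, fun ⟨_, hα, hβ⟩ => mem_Afin_of_mem_Ele hα hβ⟩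
end

section
/- Let (W,+) be a semigroup. If α, β ∈ A_fin(W), then α + β = β + α and α + β ∈ {α, β}. -/
open Pointwise

theorem add_comm_and_eq_or_eq_of_absorbs {W : Type*} [AddSemigroup W] {α : W}
    (habs : ∀ w ∉ Ele α, w + α = α ∧ α + w = α) (β : W) :
    α + β = β + α ∧ (α + β = α ∨ α + β = β) := by
  by_cases hβ : β ∈ Ele α
  · obtain ⟨-, hleft, hright⟩ := hβ
    exact ⟨hleft.trans hright.symm, Or.inr hleft⟩
  · obtain ⟨hleft, hright⟩ := habs β hβ
    exact ⟨hright.trans hleft.symm, Or.inl hright⟩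

theorem Afin_add_general {W : Type*} [AddSemigroup W] (α β : W)
    (hα : α ∈ Afin W) :
    α + β = β + α ∧ (α + β = α ∨ α + β = β) :=
  add_comm_and_eq_or_eq_of_absorbs hα.2.2 β

theorem Afin_add {W : Type*} [AddSemigroup W] (α β : W)
    (hα : α ∈ Afin W) (hβ : β ∈ Afin W) :
    α + β = β + α ∧ (α + β = α ∨ α + β = β) :=
  Afin_add_general α β hα
end

section
/- Let (W,+) be a semigroup. Then the set A(W) of quasi-absorbing elements is a (two-sided) ideal of (W,+); moreover, for any α, β ∈ A(W) one has α + β = β + α ∈ {α, β}, and A(W) ⊆ W_L(u) ∩ W_R(u) for every u ∈ W\A(W). -/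
open Pointwise

/-!
For quasi-absorbing `α`, every `w` either lies in `E^≤(α)`, and then `w + α = α + w = w`, or is
absorbed: `w + α = α + w = α`. Members of `E^≤(α)` are themselves quasi-absorbing, because
`E^≤(α)` is a `≤_H`-down-set on which `≤_H` is linear. So `w + α` and `α + w` are both `α` or
both an element of `A(W)`, which gives all three claims.
-/

section QuasiAbsorbing

variable {W : Type*} [AddSemigroup W]

lemma ReesLE.trans_s10 {f g h : W} (hfg : ReesLE f g) (hgh : ReesLE g h) : ReesLE f h := by
  constructor
  · rw [← hfg.1, ← add_assoc, hgh.1]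
  · rw [← hfg.2, add_assoc, hgh.2]

lemma Ele_subset_Ele {α f : W} (hf : f ∈ Ele α) : Ele f ⊆ Ele α :=
  fun _ hg => ⟨hg.1, hg.2.trans_s10 hf.2⟩

lemma mem_AW_of_mem_Ele {α f : W} (hα : α ∈ AW W) (hf : f ∈ Ele α) : f ∈ AW W := by
  obtain ⟨⟨-, hlin⟩, habs⟩ := hα
  have hsub := Ele_subset_Ele hf
  refine ⟨⟨hf.1, fun g hg h hh => hlin g (hsub hg) h (hsub hh)⟩, fun u hu => ?_⟩
  by_cases hu' : u ∈ Ele α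
  · rcases hlin u hu' f hf with hle | hle
    · exact absurd ⟨hu'.1, hle⟩ hu
    · exact hle
  · obtain ⟨huα, hαu⟩ := habs u hu'
    obtain ⟨-, hαf, hfα⟩ := hf
    constructor
    · rw [← hαf, ← add_assoc, huα]
    · rw [← hfα, add_assoc, hαu]

lemma AW_add_cases {α : W} (hα : α ∈ AW W) (w : W) :
    (w ∈ Ele α ∧ w + α = w ∧ α + w = w) ∨ (w + α = α ∧ α + w = α) := by
  by_cases hw : w ∈ Ele α
  · exact Or.inl ⟨hw, hw.2.2, hw.2.1⟩
  · exact Or.inr (hα.2 w hw)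

lemma add_mem_AW_left {α : W} (hα : α ∈ AW W) (w : W) : w + α ∈ AW W := by
  rcases AW_add_cases hα w with ⟨hw, h, -⟩ | ⟨h, -⟩ <;> rw [h]
  exacts [mem_AW_of_mem_Ele hα hw, hα]

lemma add_mem_AW_right {α : W} (hα : α ∈ AW W) (w : W) : α + w ∈ AW W := by
  rcases AW_add_cases hα w with ⟨hw, -, h⟩ | ⟨-, h⟩ <;> rw [h]
  exacts [mem_AW_of_mem_Ele hα hw, hα]

lemma isIdealSG_AW : IsIdealSG (AW W) := by
  constructor
  · rintro _ ⟨w, -, α, hα, rfl⟩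
    exact add_mem_AW_left hα w
  · rintro _ ⟨α, hα, w, -, rfl⟩
    exact add_mem_AW_right hα w

lemma add_comm_of_mem_AW {α : W} (hα : α ∈ AW W) (w : W) : α + w = w + α := by
  rcases AW_add_cases hα w with ⟨-, h₁, h₂⟩ | ⟨h₁, h₂⟩ <;> rw [h₁, h₂]

lemma add_eq_or_eq_of_mem_AW {α : W} (hα : α ∈ AW W) (w : W) : α + w = α ∨ α + w = w := by
  rcases AW_add_cases hα w with ⟨-, -, h⟩ | ⟨-, h⟩
  exacts [Or.inr h, Or.inl h]

lemma AW_subset_WLset_inter_WRset {u : W} (hu : u ∉ AW W) : AW W ⊆ WLset u ∩ WRset u := by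
  intro α hα
  have hu' : u ∉ Ele α := fun h => hu (mem_AW_of_mem_Ele hα h)
  obtain ⟨huα, hαu⟩ := hα.2 u hu'
  exact ⟨Or.inl ⟨α, Set.mem_univ α, u, rfl, hαu⟩, Or.inl ⟨u, rfl, α, Set.mem_univ α, huα⟩⟩

end QuasiAbsorbing

theorem AW_properties {W : Type*} [AddSemigroup W] :
    IsIdealSG (AW W) ∧
    (∀ α ∈ AW W, ∀ β ∈ AW W, α + β = β + α ∧ (α + β = α ∨ α + β = β)) ∧
    (∀ u ∈ (Set.univ : Set W) \ AW W, AW W ⊆ WLset u ∩ WRset u) :=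
  ⟨isIdealSG_AW,
    fun _ hα β _ => ⟨add_comm_of_mem_AW hα β, add_eq_or_eq_of_mem_AW hα β⟩,
    fun _ hu => AW_subset_WLset_inter_WRset hu.2⟩
end

section
/- Let d ≥ 1 be a natural number, C ⊆ ℝ^d a closed convex cone, and let A ∈ G(ℝ^d, C), i.e., A ⊆ ℝ^d with A = cl conv (A + C). Then A is idempotent with respect to the operation ⊕ (i.e., cl(A + A) = A) if and only if A = ∅ or A is a topologically closed convex cone with C ⊆ A. -/
open Pointwise Set Filter Topology

/-!
A set `A` with `A = cl conv (A + C)` is closed, convex and satisfies `A + C ⊆ A`. For convex `A`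
one has `A + A = 2 • A`, and `2 • A` is closed, so idempotency means `2 • A = A`. If `A` is
nonempty, the points `2⁻¹ ^ n • a` of `A` then converge to `0 ∈ A`; convexity together with
`0 ∈ A` and `2 ^ n • A = A` makes `A` a cone, and `C = 0 + C ⊆ A + C ⊆ A`.
-/

theorem pow_smul_eq_self_of_smul_eq_self {M α : Type*} [Monoid M] [MulAction M α] {c : M} {x : α}
    (h : c • x = x) (n : ℕ) : c ^ n • x = x :=
  MulAction.mem_stabilizerSubmonoid_iff.1 (pow_mem (MulAction.mem_stabilizerSubmonoid_iff.2 h) n)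

section

variable {E : Type*} [AddCommGroup E] [Module ℝ E] {A : Set E}

theorem Convex.add_self_eq_two_smul (hA : Convex ℝ A) : A + A = (2 : ℝ) • A := by
  rw [← one_add_one_eq_two, hA.add_smul zero_le_one zero_le_one, one_smul]

theorem Convex.two_smul_eq_of_closure_add_self_eq [TopologicalSpace E] [T1Space E]
    [ContinuousConstSMul ℝ E]
    (hconv : Convex ℝ A) (hclosed : IsClosed A) (h : closure (A + A) = A) :
    (2 : ℝ) • A = A := by
  rwa [hconv.add_self_eq_two_smul, closure_smul₀, hclosed.closure_eq] at h

theorem IsClosed.zero_mem_of_smul_set_eq [TopologicalSpace E] [ContinuousSMul ℝ E]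
    (hclosed : IsClosed A) (hne : A.Nonempty) {c : ℝ} (hc : |c| < 1) (h : c • A = A) :
    (0 : E) ∈ A := by
  obtain ⟨a, ha⟩ := hne
  have hlim : Tendsto (fun n : ℕ ↦ c ^ n • a) atTop (𝓝 0) := by
    simpa using (tendsto_pow_atTop_nhds_zero_of_abs_lt_one hc).smul_const a
  refine hclosed.mem_of_tendsto hlim (Eventually.of_forall fun n ↦ ?_)
  rw [← pow_smul_eq_self_of_smul_eq_self h n]
  exact smul_mem_smul_set ha

theorem Convex.smul_mem_of_smul_set_eq (hconv : Convex ℝ A) (h0 : (0 : E) ∈ A) {c : ℝ}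
    (hc : 1 < c) (h : c • A = A) {s : ℝ} (hs : 0 ≤ s) {a : E} (ha : a ∈ A) : s • a ∈ A := by
  obtain ⟨n, hn⟩ := pow_unbounded_of_one_lt s hc
  have hpos : 0 < c ^ n := pow_pos (zero_lt_one.trans hc) n
  have hpow : c ^ n • a ∈ A := by
    rw [← pow_smul_eq_self_of_smul_eq_self h n]
    exact smul_mem_smul_set ha
  have hmem := hconv.smul_mem_of_zero_mem h0 hpow
    ⟨div_nonneg hs hpos.le, (div_le_one hpos).2 hn.le⟩
  rwa [smul_smul, div_mul_cancel₀ s hpos.ne'] at hmem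

theorem IsClosed.closure_add_self_eq [TopologicalSpace E] (hclosed : IsClosed A)
    (hadd : ∀ z₁ ∈ A, ∀ z₂ ∈ A, z₁ + z₂ ∈ A) (hhalf : ∀ z ∈ A, (2⁻¹ : ℝ) • z ∈ A) :
    closure (A + A) = A := by
  refine (closure_minimal ?_ hclosed).antisymm fun a ha ↦ subset_closure ?_
  · rintro _ ⟨x, hx, y, hy, rfl⟩
    exact hadd x hx y hy
  · have hsum := add_mem_add (hhalf a ha) (hhalf a ha)
    rwa [← add_smul, show (2⁻¹ + 2⁻¹ : ℝ) = 1 by norm_num, one_smul] at hsum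

end

theorem idempotent_in_G_iff_general {d : ℕ} (C : Set (Fin d → ℝ))
    (A : Set (Fin d → ℝ))
    (hA : A = closure (convexHull ℝ (A + C))) :
    closure (A + A) = A ↔
      A = ∅ ∨
        (IsClosed A ∧ (∀ s : ℝ, 0 < s → ∀ z ∈ A, s • z ∈ A) ∧
          (∀ z₁ ∈ A, ∀ z₂ ∈ A, z₁ + z₂ ∈ A) ∧ C ⊆ A) := by
  have hclosed : IsClosed A := by rw [hA]; exact isClosed_closure
  have hconv : Convex ℝ A := by rw [hA]; exact (convex_convexHull ℝ _).closure
  have hAC : A + C ⊆ A := fun x hx ↦ by rw [hA]; exact subset_closure (subset_convexHull ℝ _ hx)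
  constructor
  · intro h
    obtain rfl | hne := A.eq_empty_or_nonempty
    · exact Or.inl rfl
    have htwo := hconv.two_smul_eq_of_closure_add_self_eq hclosed h
    have hhalf : (2⁻¹ : ℝ) • A = A := by
      conv_lhs => rw [← htwo]
      exact inv_smul_smul₀ (two_ne_zero' ℝ) A
    have h0 := hclosed.zero_mem_of_smul_set_eq hne (by norm_num [abs_of_pos]) hhalf
    refine Or.inr ⟨hclosed,
      fun s hs z hz ↦ hconv.smul_mem_of_smul_set_eq h0 one_lt_two htwo hs.le hz,
      fun x hx y hy ↦ h ▸ subset_closure (add_mem_add hx hy), fun c hc ↦ ?_⟩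
    simpa using hAC (add_mem_add h0 hc)
  · rintro (rfl | ⟨hcl, hsmul, hadd, -⟩)
    · simp
    · exact hcl.closure_add_self_eq hadd fun z hz ↦ hsmul 2⁻¹ (by norm_num) z hz

theorem idempotent_in_G_iff {d : ℕ} (hd : 1 ≤ d) (C : Set (Fin d → ℝ))
    (hC_closed : IsClosed C)
    (hC_cone : ∀ s : ℝ, 0 < s → ∀ z ∈ C, s • z ∈ C)
    (hC_add : ∀ z₁ ∈ C, ∀ z₂ ∈ C, z₁ + z₂ ∈ C)
    (A : Set (Fin d → ℝ))
    (hA : A = closure (convexHull ℝ (A + C))) :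
    closure (A + A) = A ↔
      A = ∅ ∨
        (IsClosed A ∧ (∀ s : ℝ, 0 < s → ∀ z ∈ A, s • z ∈ A) ∧
          (∀ z₁ ∈ A, ∀ z₂ ∈ A, z₁ + z₂ ∈ A) ∧ C ⊆ A) :=
  idempotent_in_G_iff_general C A hA
end
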